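/- For all nonnegative integers α, β, σ, the alternating sum over ρ from 0 to σ of (-1)^ρ * C(ρ+β, β) * C(α+β+σ+1, α+β+ρ+1) equals C(σ+α, α). -/

import Mathlib

/-!
Upper negation turns `(-1)^ρ C(ρ+β, β)` into the generalized binomial coefficient
`C(-β-1, ρ)`, and symmetry turns `C(α+β+σ+1, α+β+ρ+1)` into `C(α+β+σ+1, σ-ρ)`. The sum is then
a Chu–Vandermonde convolution in the binomial ring `ℤ`, equal to
`C(-β-1 + (α+β+σ+1), σ) = C(α+σ, σ)`.
-/

open Finset

theorem Ring.choose_neg_natCast_add_one (β ρ : ℕ) :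
    Ring.choose (-((β : ℤ) + 1)) ρ = (-1) ^ ρ * (ρ + β).choose β := by
  rw [Ring.choose_neg, Units.smul_def, Int.coe_negOnePow_natCast, smul_eq_mul,
    add_right_comm, add_sub_cancel_right, ← Nat.cast_add, Ring.choose_natCast, add_comm,
    Nat.choose_symm_add]

theorem Ring.add_choose_eq_sum_range {R : Type*} [CommRing R] [BinomialRing R] (r s : R)
    (k : ℕ) :
    Ring.choose (r + s) k = ∑ i ∈ range (k + 1), Ring.choose r i * Ring.choose s (k - i) := by
  rw [Ring.add_choose_eq k (Commute.all r s), Nat.sum_antidiagonal_eq_sum_range_succ_mk]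

/-- Combinatorial identity (eq. 81):
`∑_{ρ=0}^{σ} (-1)^ρ C(ρ+β, β) C(α+β+σ+1, α+β+ρ+1) = C(σ+α, α)`. -/
theorem stmt_1 (α β σ : ℕ) :
    ∑ ρ ∈ Finset.range (σ + 1),
      (-1 : ℤ) ^ ρ * (Nat.choose (ρ + β) β) * (Nat.choose (α + β + σ + 1) (α + β + ρ + 1))
      = Nat.choose (σ + α) α := by
  have hterm : ∀ ρ ∈ range (σ + 1),
      (-1 : ℤ) ^ ρ * (Nat.choose (ρ + β) β) * (Nat.choose (α + β + σ + 1) (α + β + ρ + 1)) =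
        Ring.choose (-((β : ℤ) + 1)) ρ * Ring.choose ((α + β + σ + 1 : ℕ) : ℤ) (σ - ρ) := by
    intro ρ hρ
    have hρσ : ρ ≤ σ := Nat.lt_succ_iff.mp (mem_range.mp hρ)
    rw [Ring.choose_neg_natCast_add_one, Ring.choose_natCast,
      Nat.choose_symm_of_eq_add (show α + β + σ + 1 = α + β + ρ + 1 + (σ - ρ) by omega)]
  have hupper : -((β : ℤ) + 1) + ((α + β + σ + 1 : ℕ) : ℤ) = ((σ + α : ℕ) : ℤ) := by
    push_cast; ring
  rw [sum_congr rfl hterm, ← Ring.add_choose_eq_sum_range, hupper, Ring.choose_natCast,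
    Nat.choose_symm_add]
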